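/- Dixmier's infinite-dimensional Schur lemma: Let A be an algebra over ℂ and V an irreducible representation of A with at most countable dimension. Then any homomorphism of representations φ: V → V is a scalar operator. -/
import Mathlib

open Polynomial Module Cardinal

/-- Dixmier's infinite-dimensional Schur lemma. -/
theorem dixmier_schur (A V : Type) [Ring A] [Algebra ℂ A]
    [AddCommGroup V] [Module ℂ V] [Module A V] [IsScalarTower ℂ A V]
    [IsSimpleModule A V]
    (hcount : ∃ s : Set V, s.Countable ∧ Submodule.span ℂ s = ⊤)
    (φ : V →ₗ[A] V) : ∃ c : ℂ, ∀ v : V, φ v = c • v := by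
  haveI : SMulCommClass ℂ A V := IsScalarTower.to_smulCommClass
  by_cases hc : ∃ c : ℂ, (φ : Module.End A V) = algebraMap ℂ (Module.End A V) c
  · obtain ⟨c, hφ⟩ := hc
    exact ⟨c, fun v => by
      rw [show φ v = (φ : Module.End A V) v from rfl, hφ, Module.algebraMap_end_apply]⟩
  exfalso
  push_neg at hc
  -- every φ - λ is bijective (Schur)
  have hbij : ∀ c : ℂ, Function.Bijective ((φ : Module.End A V) - algebraMap ℂ (Module.End A V) c) := by
    intro c
    apply LinearMap.bijective_of_ne_zero
    intro h0
    exact hc c (by rw [← sub_eq_zero]; exact h0)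
  -- nonzero polynomials in φ act injectively
  have hinj : ∀ p : ℂ[X], p ≠ 0 →
      Function.Injective (aeval (φ : Module.End A V) p : Module.End A V) := by
    suffices h : ∀ n : ℕ, ∀ p : ℂ[X], p.natDegree = n → p ≠ 0 →
        Function.Injective (aeval (φ : Module.End A V) p : Module.End A V) from
      fun p hp => h p.natDegree p rfl hp
    intro n
    induction n using Nat.strong_induction_on with
    | _ n ih =>
      intro p hdeg hp
      rcases Nat.eq_zero_or_pos n with h0 | h1
      · subst h0
        obtain ⟨a, rfl⟩ := Polynomial.natDegree_eq_zero.mp hdeg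
        have ha : a ≠ 0 := fun h => hp (by rw [h, map_zero])
        rw [aeval_C]
        intro x y hxy
        simp only [Module.algebraMap_end_apply] at hxy
        exact smul_right_injective V ha hxy
      · obtain ⟨r, hr⟩ := Complex.exists_root (by
          rw [Polynomial.degree_eq_natDegree hp, hdeg]; exact_mod_cast h1)
        obtain ⟨q, hq⟩ := (Polynomial.dvd_iff_isRoot.mpr hr)
        have hq0 : q ≠ 0 := fun h => hp (by rw [hq, h, mul_zero])
        have hqd : q.natDegree < n := by
          have := Polynomial.natDegree_mul (X_sub_C_ne_zero r) hq0
          rw [← hq, hdeg, Polynomial.natDegree_X_sub_C] at this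
          omega
        rw [hq, map_mul]
        have heq : (aeval (φ : Module.End A V) (X - C r) *
            aeval (φ : Module.End A V) q : Module.End A V) =
            ((φ : Module.End A V) - algebraMap ℂ (Module.End A V) r) *
              aeval (φ : Module.End A V) q := by
          rw [map_sub, aeval_X, aeval_C]
        rw [heq]
        intro x y hxy
        exact ih q.natDegree hqd q rfl hq0 ((hbij r).injective hxy)
  -- pick a nonzero vector and build the family (φ - λ)⁻¹ v
  haveI := IsSimpleModule.nontrivial A V
  obtain ⟨v, hv⟩ := exists_ne (0 : V)
  set u : ℂ → Module.End A V := fun c => (φ : Module.End A V) - algebraMap ℂ (Module.End A V) c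
    with hu
  set w : ℂ → V := fun c => (LinearEquiv.ofBijective (u c) (hbij c)).symm v with hw
  have huw : ∀ c, u c (w c) = v := fun c =>
    (LinearEquiv.ofBijective (u c) (hbij c)).apply_symm_apply v
  have hli : LinearIndependent ℂ w := by
    rw [linearIndependent_iff']
    intro s g hsum i hi
    by_contra hgi
    set q : ℂ[X] := ∑ j ∈ s, C (g j) * ∏ μ ∈ s.erase j, (X - C μ) with hqdef
    have hqne : q ≠ 0 := by
      intro h
      have heval : q.eval i = g i * ∏ μ ∈ s.erase i, (i - μ) := by
        rw [hqdef]
        rw [Polynomial.eval_finset_sum]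
        rw [Finset.sum_eq_single i]
        · simp [Polynomial.eval_prod]
        · intro j hj hji
          rw [Polynomial.eval_mul]
          apply mul_eq_zero_of_right
          rw [Polynomial.eval_prod]
          exact Finset.prod_eq_zero (Finset.mem_erase.mpr ⟨hji.symm, hi⟩) (by simp)
        · intro h'; exact absurd hi h'
      rw [h] at heval
      simp only [Polynomial.eval_zero] at heval
      have : g i * ∏ μ ∈ s.erase i, (i - μ) ≠ 0 := by
        apply mul_ne_zero hgi
        apply Finset.prod_ne_zero_iff.mpr
        intro μ hμ
        exact sub_ne_zero.mpr (Ne.symm (Finset.mem_erase.mp hμ).1)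
      exact this heval.symm
    -- evaluate the polynomial at φ applied to v
    have key : (aeval (φ : Module.End A V) q) v = 0 := by
      set P : ℂ → Module.End A V :=
        fun j => aeval (φ : Module.End A V) (∏ μ ∈ s.erase j, (X - C μ)) with hP
      have h1 : (aeval (φ : Module.End A V) q : Module.End A V) = ∑ j ∈ s, g j • P j := by
        rw [hqdef, map_sum]
        refine Finset.sum_congr rfl fun j _ => ?_
        rw [map_mul, aeval_C, ← Algebra.smul_def, hP]
      have h2 : ∀ j ∈ s, P j v = (aeval (φ : Module.End A V) (∏ μ ∈ s, (X - C μ))) (w j) := by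
        intro j hj
        rw [← Finset.prod_erase_mul s _ hj, map_mul]
        rw [show ((P j) * aeval (φ : Module.End A V) (X - C j)) (w j)
          = (P j) ((aeval (φ : Module.End A V) (X - C j)) (w j)) from rfl]
        congr 1
        rw [map_sub, aeval_X, aeval_C]
        exact (huw j).symm
      rw [h1, LinearMap.sum_apply]
      calc (∑ j ∈ s, (g j • P j) v)
          = ∑ j ∈ s, g j • (aeval (φ : Module.End A V) (∏ μ ∈ s, (X - C μ))) (w j) := by
            refine Finset.sum_congr rfl fun j hj => ?_
            rw [LinearMap.smul_apply, h2 j hj]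
        _ = (aeval (φ : Module.End A V) (∏ μ ∈ s, (X - C μ))) (∑ j ∈ s, g j • w j) := by
            rw [map_sum]
            refine Finset.sum_congr rfl fun j _ => ?_
            rw [LinearMap.map_smul_of_tower]
        _ = 0 := by rw [hsum, map_zero]
    have := hinj q hqne (by rw [key, map_zero] : (aeval (φ : Module.End A V) q) v
      = (aeval (φ : Module.End A V) q) 0)
    exact hv this
  -- cardinality contradiction
  have h1 : #ℂ ≤ Module.rank ℂ V := hli.cardinal_le_rank
  obtain ⟨s, hsc, hsp⟩ := hcount
  have h2 : Module.rank ℂ V ≤ ℵ₀ := by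
    rw [← rank_top ℂ V, ← hsp]
    exact (rank_span_le s).trans (Cardinal.le_aleph0_iff_set_countable.mpr hsc)
  have := h1.trans h2
  rw [mk_complex] at this
  exact absurd this Cardinal.aleph0_lt_continuum.not_ge
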